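/- arXiv:1907.05188 — 8 statements merged into one kernel-verified Lean document; each statement's English description precedes it below -/
import Mathlib

section
/- Let W be a set with a left action of the monoid M of injective self-maps of the positive natural numbers, and let x ∈ W. If x is supported on two finite subsets A and B of ω, then x is supported on A ∩ B. -/
/-- The injection monoid `M`: injective self-maps of `ℕ` under composition. -/
def M : Submonoid (Function.End ℕ) where
  carrier := {f | Function.Injective f}
  mul_mem' := fun hf hg => hf.comp hg
  one_mem' := fun _ _ h => h

/-- An element `x` of an `M`-set is supported on `A ⊆ ℕ` if every `f ∈ M`
fixing `A` elementwise satisfies `f • x = x`. -/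
def SuppOn {W : Type*} [MulAction M W] (x : W) (A : Set ℕ) : Prop :=
  ∀ f : M, (∀ a ∈ A, f.1 a = a) → f • x = x

/-- An element is finitely supported if it is supported on some finite set. -/
def FinSupp {W : Type*} [MulAction M W] (x : W) : Prop :=
  ∃ A : Finset ℕ, SuppOn x ↑A

open Classical in
/-- The support: intersection of all finite supporting sets, or `Set.univ`
if the element is not finitely supported. -/
noncomputable def supp {W : Type*} [MulAction M W] (x : W) : Set ℕ :=
  if FinSupp x then ⋂₀ {A : Set ℕ | A.Finite ∧ SuppOn x A} else Set.univ

/-- Auxiliary: shifting everything outside `S` up by `N` is injective when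
all of `S` is below `N`. -/
private lemma shift_inj (S : Set ℕ) [DecidablePred (· ∈ S)] (N : ℕ)
    (hS : ∀ s ∈ S, s < N) :
    Function.Injective (fun n => if n ∈ S then n else n + N) := by
  intro a b hab
  dsimp only at hab
  by_cases ha : a ∈ S <;> by_cases hb : b ∈ S <;>
    simp only [ha, hb, if_true, if_false] at hab
  · exact hab
  · have := hS a ha; omega
  · have := hS b hb; omega
  · omega

/-- If `x` is supported on finite sets `A` and `B`, then it is supported on `A ∩ B`. -/
theorem supported_on_inter {W : Type*} [MulAction M W] (x : W) (A B : Set ℕ)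
    (hA : A.Finite) (hB : B.Finite) (hxA : SuppOn x A) (hxB : SuppOn x B) :
    SuppOn x (A ∩ B) := by
  classical
  rintro ⟨f, hf⟩ hfix
  have hf' : Function.Injective f := hf
  set D : Set ℕ := (A ∪ B) ∪ f ⁻¹' (A ∪ B) with hDdef
  have hDfin : D.Finite :=
    (hA.union hB).union ((hA.union hB).preimage (hf'.injOn))
  obtain ⟨N0, hN0⟩ := hDfin.bddAbove
  set N1 : ℕ := N0 + 1 with hN1def
  have hDlt : ∀ d ∈ D, d < N1 := fun d hd => Nat.lt_succ_of_le (hN0 hd)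
  have hAD : A ⊆ D := fun a ha => Or.inl (Or.inl ha)
  have hBD : B ⊆ D := fun b hb => Or.inl (Or.inr hb)
  have hpreD : f ⁻¹' (A ∪ B) ⊆ D := fun a ha => Or.inr ha
  have hnotD : ∀ n : ℕ, n + N1 ∉ D := fun n hn => by have := hDlt _ hn; omega
  -- the shifts
  set g0 : ℕ → ℕ := fun n => if n ∈ B then n else n + N1 with hg0def
  set g1 : ℕ → ℕ := fun n => if n ∈ A then n else n + N1 with hg1def
  have hg0inj : Function.Injective g0 := shift_inj B N1 (fun s hs => hDlt s (hBD hs))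
  have hg1inj : Function.Injective g1 := shift_inj A N1 (fun s hs => hDlt s (hAD hs))
  set t : ℕ → ℕ := fun n => f (g1 (g0 n)) with htdef
  have htinj : Function.Injective t := fun a b h => hg0inj (hg1inj (hf' h))
  have htC : ∀ n ∈ A ∩ B, t n = n := by
    intro n hn
    show f (g1 (g0 n)) = n
    rw [show g0 n = n from if_pos hn.2, show g1 n = n from if_pos hn.1]
    exact hfix n hn
  have htout : ∀ n, n ∉ A ∩ B → t n ∉ A ∪ B := by
    intro n hn hmem
    have key : ∃ kk, g1 (g0 n) = kk + N1 := by
      by_cases hb : n ∈ B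
      · have ha : n ∉ A := fun ha => hn ⟨ha, hb⟩
        rw [show g0 n = n from if_pos hb, show g1 n = n + N1 from if_neg ha]
        exact ⟨n, rfl⟩
      · rw [show g0 n = n + N1 from if_neg hb]
        have hna : n + N1 ∉ A := fun hc => hnotD n (hAD hc)
        rw [show g1 (n + N1) = (n + N1) + N1 from if_neg hna]
        exact ⟨n + N1, rfl⟩
    obtain ⟨kk, hk⟩ := key
    have hmem' : g1 (g0 n) ∈ f ⁻¹' (A ∪ B) := hmem
    rw [hk] at hmem'
    exact hnotD kk (hpreD hmem')
  have htA : ∀ n, t n ∈ A → n ∈ A ∩ B := by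
    intro n h
    by_contra hc
    exact htout n hc (Or.inl h)
  -- the map m : fixes B, sends the complement of B bijectively onto the
  -- complement of A ∪ B
  set p : ℕ → Prop := fun n => n ∉ B with hpdef
  set q : ℕ → Prop := fun n => n ∉ A ∪ B with hqdef
  have hpinf : (setOf p).Infinite := hB.infinite_compl
  have hqinf : (setOf q).Infinite := (hA.union hB).infinite_compl
  set m : ℕ → ℕ := fun n => if n ∈ B then n else Nat.nth q (Nat.count p n) with hmdef
  have hmB : ∀ n ∈ B, m n = n := fun n hn => if_pos hn
  have hmq : ∀ n, n ∉ B → m n ∉ A ∪ B := by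
    intro n hn
    rw [show m n = Nat.nth q (Nat.count p n) from if_neg hn]
    exact Nat.nth_mem_of_infinite hqinf _
  have hminj : Function.Injective m := by
    intro a b hab
    by_cases ha : a ∈ B <;> by_cases hb : b ∈ B
    · rwa [hmB a ha, hmB b hb] at hab
    · rw [hmB a ha] at hab
      exact absurd (Or.inr ha) (hab ▸ hmq b hb)
    · rw [hmB b hb] at hab
      exact absurd (Or.inr hb) (hab.symm ▸ hmq a ha)
    · rw [show m a = Nat.nth q (Nat.count p a) from if_neg ha,
        show m b = Nat.nth q (Nat.count p b) from if_neg hb] at hab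
      have hcount : Nat.count p a = Nat.count p b := Nat.nth_injective hqinf hab
      calc a = Nat.nth p (Nat.count p a) := (Nat.nth_count ha).symm
        _ = Nat.nth p (Nat.count p b) := by rw [hcount]
        _ = b := Nat.nth_count hb
  have hmsurj : ∀ y, y ∉ A → ∃ n, m n = y := by
    intro y hy
    by_cases hyB : y ∈ B
    · exact ⟨y, hmB y hyB⟩
    · have hqy : q y := fun h => h.elim hy hyB
      refine ⟨Nat.nth p (Nat.count q y), ?_⟩
      have hnp : p (Nat.nth p (Nat.count q y)) := Nat.nth_mem_of_infinite hpinf _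
      rw [show m (Nat.nth p (Nat.count q y))
            = Nat.nth q (Nat.count p (Nat.nth p (Nat.count q y))) from if_neg hnp,
        Nat.count_nth_of_infinite hpinf, Nat.nth_count hqy]
  -- the map k : fixes A, and k ∘ m = t
  set k : ℕ → ℕ := fun y => if y ∈ A then y else t (Function.invFun m y) with hkdef
  have hkA : ∀ a ∈ A, k a = a := fun a ha => if_pos ha
  have hkm : ∀ n, k (m n) = t n := by
    intro n
    by_cases hmA : m n ∈ A
    · by_cases hnB : n ∈ B
      · have hmn : m n = n := hmB n hnB
        rw [hmn] at hmA ⊢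
        rw [show k n = n from if_pos hmA, htC n ⟨hmA, hnB⟩]
      · exact absurd (Or.inl hmA) (hmq n hnB)
    · rw [show k (m n) = t (Function.invFun m (m n)) from if_neg hmA,
        Function.leftInverse_invFun hminj n]
  have hkinj : Function.Injective k := by
    intro a b hab
    by_cases ha : a ∈ A <;> by_cases hb : b ∈ A
    · rwa [hkA a ha, hkA b hb] at hab
    · exfalso
      rw [hkA a ha, show k b = t (Function.invFun m b) from if_neg hb] at hab
      have hmb : m (Function.invFun m b) = b := Function.invFun_eq (hmsurj b hb)
      have hin : Function.invFun m b ∈ A ∩ B := htA _ (hab ▸ ha)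
      have : m (Function.invFun m b) = Function.invFun m b := hmB _ hin.2
      exact hb (by rw [← hmb, this]; exact hin.1)
    · exfalso
      rw [hkA b hb, show k a = t (Function.invFun m a) from if_neg ha] at hab
      have hma : m (Function.invFun m a) = a := Function.invFun_eq (hmsurj a ha)
      have hin : Function.invFun m a ∈ A ∩ B := htA _ (hab.symm ▸ hb)
      have : m (Function.invFun m a) = Function.invFun m a := hmB _ hin.2
      exact ha (by rw [← hma, this]; exact hin.1)
    · rw [show k a = t (Function.invFun m a) from if_neg ha,
        show k b = t (Function.invFun m b) from if_neg hb] at hab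
      have hma : m (Function.invFun m a) = a := Function.invFun_eq (hmsurj a ha)
      have hmb : m (Function.invFun m b) = b := Function.invFun_eq (hmsurj b hb)
      rw [← hma, ← hmb, htinj hab]
  -- assemble the identity f * g1 * g0 = k * m in M
  have hmul : ((⟨f, hf⟩ : M) * ⟨g1, hg1inj⟩ * ⟨g0, hg0inj⟩)
      = ((⟨k, hkinj⟩ : M) * ⟨m, hminj⟩) := by
    apply Subtype.ext
    funext n
    show f (g1 (g0 n)) = k (m n)
    rw [hkm n]
  have e0 : (⟨g0, hg0inj⟩ : M) • x = x := hxB _ (fun b hb => if_pos hb)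
  have e1 : (⟨g1, hg1inj⟩ : M) • x = x := hxA _ (fun a ha => if_pos ha)
  have em : (⟨m, hminj⟩ : M) • x = x := hxB _ (fun b hb => if_pos hb)
  have ek : (⟨k, hkinj⟩ : M) • x = x := hxA _ (fun a ha => if_pos ha)
  calc (⟨f, hf⟩ : M) • x
      = (⟨f, hf⟩ : M) • ((⟨g1, hg1inj⟩ : M) • ((⟨g0, hg0inj⟩ : M) • x)) := by
        rw [e0, e1]
    _ = ((⟨f, hf⟩ : M) * ⟨g1, hg1inj⟩ * ⟨g0, hg0inj⟩) • x := by
        rw [mul_smul, mul_smul]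
    _ = ((⟨k, hkinj⟩ : M) * ⟨m, hminj⟩) • x := by rw [hmul]
    _ = x := by rw [mul_smul, em, ek]
end

section
/- Let W be an M-set, x ∈ W a finitely supported element, and f, g ∈ M injections that agree on the support of x. Then f·x = g·x. -/
/-- Coerce a permutation of `ℕ` to an element of `M`. -/
def permM (π : Equiv.Perm ℕ) : M := ⟨(π : ℕ → ℕ), π.injective⟩

lemma permM_mul (π τ : Equiv.Perm ℕ) : permM (π * τ) = permM π * permM τ := by
  apply Subtype.ext
  rfl

lemma permM_one : permM 1 = 1 := rfl

/-- If `f ∈ M` agrees with a permutation `π` on a supporting set, then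
`f • x = π • x`. -/
lemma smul_perm_of_agree {W : Type*} [MulAction M W] (x : W) (S : Set ℕ)
    (hS : SuppOn x S) (f : M) (π : Equiv.Perm ℕ) (hfπ : ∀ a ∈ S, f.1 a = π a) :
    f • x = permM π • x := by
  have hs : Function.Injective (fun n => π.symm (f.1 n)) :=
    π.symm.injective.comp f.2
  set s : M := ⟨fun n => π.symm (f.1 n), hs⟩ with hsdef
  have h1 : s • x = x := by
    apply hS
    intro a ha
    show π.symm (f.1 a) = a
    rw [hfπ a ha, Equiv.symm_apply_apply]
  have h2 : f = permM π * s := by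
    apply Subtype.ext
    funext n
    show f.1 n = π (π.symm (f.1 n))
    rw [Equiv.apply_symm_apply]
  rw [h2, mul_smul, h1]

/-- Any injection on `ℕ` agrees with some permutation on a given finite set,
and the permutation moves only points of `S ∪ f '' S`. -/
lemma exists_perm_ext (S : Finset ℕ) (f : ℕ → ℕ) (hf : Function.Injective f) :
    ∃ π : Equiv.Perm ℕ, (∀ a ∈ S, π a = f a) ∧
      ∀ n, π n ≠ n → n ∈ S ∪ S.image f := by
  classical
  induction S using Finset.induction_on with
  | empty => exact ⟨1, by simp, by simp⟩
  | @insert a S ha ih =>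
    obtain ⟨π, hπ, hmoved⟩ := ih
    refine ⟨Equiv.swap (π a) (f a) * π, ?_, ?_⟩
    · intro b hb
      rcases Finset.mem_insert.mp hb with rfl | hb
      · show Equiv.swap (π b) (f b) (π b) = f b
        exact Equiv.swap_apply_left _ _
      · have hba : b ≠ a := fun h => ha (h ▸ hb)
        show Equiv.swap (π a) (f a) (π b) = f b
        rw [hπ b hb]
        refine Equiv.swap_apply_of_ne_of_ne ?_ ?_
        · intro hfb
          exact hba (π.injective ((hπ b hb).trans hfb))
        · exact fun h => hba (hf h)
    · intro n hn
      by_contra hmem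
      simp only [Finset.mem_union, Finset.mem_insert, Finset.mem_image, not_or,
        not_exists, not_and] at hmem
      obtain ⟨⟨hna, hnS⟩, himg⟩ := hmem
      have hπn : π n = n := by
        by_contra hc
        rcases Finset.mem_union.mp (hmoved n hc) with h | h
        · exact hnS h
        · obtain ⟨b, hb, hbn⟩ := Finset.mem_image.mp h
          exact himg b (Or.inr hb) hbn
      apply hn
      show Equiv.swap (π a) (f a) (π n) = n
      rw [hπn]
      refine Equiv.swap_apply_of_ne_of_ne ?_ ?_
      · exact fun h => hna (π.injective (hπn.trans h))
      · exact fun h => himg a (Or.inl rfl) h.symm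

/-- If `f, g ∈ M` agree on a finite supporting set, then `f • x = g • x`. -/
lemma smul_eq_of_agree_on_finset {W : Type*} [MulAction M W] (x : W)
    (S : Finset ℕ) (hS : SuppOn x ↑S) (f g : M)
    (h : ∀ a ∈ S, f.1 a = g.1 a) : f • x = g • x := by
  obtain ⟨π, hπ, -⟩ := exists_perm_ext S f.1 f.2
  rw [smul_perm_of_agree x ↑S hS f π (fun a ha => (hπ a ha).symm),
      smul_perm_of_agree x ↑S hS g π
        (fun a ha => ((h a ha).symm).trans (hπ a ha).symm)]

/-- A swap of two elements both avoiding a finite supporting set acts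
trivially. -/
lemma swap_smul_of_notMem {W : Type*} [MulAction M W] (x : W)
    (C : Finset ℕ) (hC : SuppOn x ↑C) (a b : ℕ) (ha : a ∉ C) (hb : b ∉ C) :
    permM (Equiv.swap a b) • x = x := by
  apply hC
  intro n hn
  show Equiv.swap a b n = n
  exact Equiv.swap_apply_of_ne_of_ne (fun h => ha (h ▸ hn)) (fun h => hb (h ▸ hn))

/-- Cross case: `a ∈ A \ B`, `b ∈ B \ A`. -/
lemma swap_smul_cross {W : Type*} [MulAction M W] (x : W) (A B : Finset ℕ)
    (hA : SuppOn x ↑A) (hB : SuppOn x ↑B) (a b : ℕ)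
    (haA : a ∈ A) (haB : a ∉ B) (hbA : b ∉ A) (hbB : b ∈ B) :
    permM (Equiv.swap a b) • x = x := by
  classical
  obtain ⟨c, hc⟩ := Infinite.exists_notMem_finset (A ∪ B ∪ {a, b})
  simp only [Finset.mem_union, Finset.mem_insert, Finset.mem_singleton, not_or] at hc
  obtain ⟨⟨hcA, hcB⟩, hca, hcb⟩ := hc
  have hab : a ≠ b := fun h => haB (h ▸ hbB)
  have hid : Equiv.swap a b = Equiv.swap a c * Equiv.swap b c * Equiv.swap a c := by
    ext n
    simp only [Equiv.Perm.mul_apply, Equiv.swap_apply_def]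
    split_ifs <;> omega
  rw [hid, permM_mul, permM_mul, mul_smul, mul_smul,
    swap_smul_of_notMem x B hB a c haB hcB,
    swap_smul_of_notMem x A hA b c hbA hcA,
    swap_smul_of_notMem x B hB a c haB hcB]

/-- A swap of two elements avoiding `A ∩ B` acts trivially when `A, B` both
support `x`. -/
lemma swap_smul_inter {W : Type*} [MulAction M W] (x : W) (A B : Finset ℕ)
    (hA : SuppOn x ↑A) (hB : SuppOn x ↑B) (a b : ℕ)
    (ha : a ∉ A ∩ B) (hb : b ∉ A ∩ B) :
    permM (Equiv.swap a b) • x = x := by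
  classical
  simp only [Finset.mem_inter, not_and] at ha hb
  by_cases haA : a ∈ A
  · have haB : a ∉ B := ha haA
    by_cases hbB : b ∈ B
    · have hbA : b ∉ A := fun h => hb h hbB
      exact swap_smul_cross x A B hA hB a b haA haB hbA hbB
    · exact swap_smul_of_notMem x B hB a b haB hbB
  · by_cases hbA : b ∈ A
    · have hbB : b ∉ B := hb hbA
      by_cases haB : a ∈ B
      · rw [Equiv.swap_comm]
        exact swap_smul_cross x A B hA hB b a hbA hbB haA haB
      · exact swap_smul_of_notMem x B hB a b haB hbB
    · exact swap_smul_of_notMem x A hA a b haA hbA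

/-- A permutation moving only finitely many points and fixing `A ∩ B`
pointwise acts trivially. -/
lemma perm_smul_eq_self {W : Type*} [MulAction M W] (x : W) (A B : Finset ℕ)
    (hA : SuppOn x ↑A) (hB : SuppOn x ↑B) :
    ∀ (k : ℕ) (D : Finset ℕ) (π : Equiv.Perm ℕ),
      (D.filter fun n => π n ≠ n).card ≤ k →
      (∀ n, π n ≠ n → n ∈ D) →
      (∀ c ∈ A ∩ B, π c = c) → permM π • x = x := by
  classical
  intro k
  induction k with
  | zero =>
    intro D π hcard hD hF
    have hone : π = 1 := by
      ext n
      by_contra hn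
      have : n ∈ D.filter fun n => π n ≠ n := Finset.mem_filter.mpr ⟨hD n hn, hn⟩
      have : 0 < (D.filter fun n => π n ≠ n).card := Finset.card_pos.mpr ⟨n, this⟩
      omega
    rw [hone, permM_one, one_smul]
  | succ k ih =>
    intro D π hcard hD hF
    by_cases hall : ∀ n, π n = n
    · have hone : π = 1 := Equiv.ext hall
      rw [hone, permM_one, one_smul]
    · push_neg at hall
      obtain ⟨a, haMoved⟩ := hall
      set σ := Equiv.swap a (π a) * π with hσdef
      have hσa : σ a = a := by
        show Equiv.swap a (π a) (π a) = a
        exact Equiv.swap_apply_right _ _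
      have hfix : ∀ n, π n = n → σ n = n := by
        intro n hn
        show Equiv.swap a (π a) (π n) = n
        rw [hn]
        refine Equiv.swap_apply_of_ne_of_ne ?_ ?_
        · exact fun h => haMoved (h ▸ hn)
        · intro h
          have hna := π.injective (hn.trans h)
          rw [hna] at hn
          exact haMoved hn
      have hπeq : π = Equiv.swap a (π a) * σ := by
        rw [hσdef, ← mul_assoc, Equiv.swap_mul_self, one_mul]
      have hsub : (D.filter fun n => σ n ≠ n) ⊆
          (D.filter fun n => π n ≠ n).erase a := by
        intro n hn
        obtain ⟨hnD, hnσ⟩ := Finset.mem_filter.mp hn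
        refine Finset.mem_erase.mpr ⟨?_, Finset.mem_filter.mpr ⟨hnD, ?_⟩⟩
        · exact fun h => hnσ (h ▸ hσa)
        · exact fun h => hnσ (hfix n h)
      have haMem : a ∈ D.filter fun n => π n ≠ n :=
        Finset.mem_filter.mpr ⟨hD a haMoved, haMoved⟩
      have hcard' : (D.filter fun n => σ n ≠ n).card ≤ k := by
        have h1 := Finset.card_le_card hsub
        have h2 := Finset.card_erase_of_mem haMem
        have h3 : 0 < (D.filter fun n => π n ≠ n).card :=
          Finset.card_pos.mpr ⟨a, haMem⟩
        omega
      have haF : a ∉ A ∩ B := fun h => haMoved (hF a h)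
      have hπaF : π a ∉ A ∩ B := by
        intro h
        have h2 : π (π a) = π a := hF _ h
        exact haMoved (π.injective h2)
      have hσD : ∀ n, σ n ≠ n → n ∈ D := by
        intro n hn
        apply hD
        exact fun h => hn (hfix n h)
      have hσF : ∀ c ∈ A ∩ B, σ c = c := fun c hc => hfix c (hF c hc)
      have hσx : permM σ • x = x := ih D σ hcard' hσD hσF
      rw [hπeq, permM_mul, mul_smul, hσx]
      exact swap_smul_inter x A B hA hB a (π a) haF hπaF

/-- Supporting finite sets are closed under intersection. -/
lemma suppOn_inter {W : Type*} [MulAction M W] (x : W) (A B : Finset ℕ)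
    (hA : SuppOn x ↑A) (hB : SuppOn x ↑B) : SuppOn x ↑(A ∩ B) := by
  classical
  intro f hf
  obtain ⟨π, hπ, hmoved⟩ := exists_perm_ext A f.1 f.2
  rw [smul_perm_of_agree x ↑A hA f π (fun a ha => (hπ a ha).symm)]
  refine perm_smul_eq_self x A B hA hB (A ∪ A.image f.1).card (A ∪ A.image f.1) π
    (Finset.card_le_card (Finset.filter_subset _ _)) hmoved ?_
  intro c hc
  rw [hπ c (Finset.mem_inter.mp hc).1]
  exact hf c (by exact_mod_cast hc)

/-- If `f, g ∈ M` agree on the support of a finitely supported element `x`,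
then `f • x = g • x`. -/
theorem smul_eq_of_agree_on_supp {W : Type*} [MulAction M W] (x : W) (hx : FinSupp x)
    (f g : M) (h : ∀ a ∈ supp x, f.1 a = g.1 a) :
    f • x = g • x := by
  classical
  have hex : ∃ n, ∃ S : Finset ℕ, S.card = n ∧ SuppOn x ↑S := by
    obtain ⟨A, hA⟩ := hx
    exact ⟨A.card, A, rfl, hA⟩
  obtain ⟨S, hScard, hS⟩ := Nat.find_spec hex
  have hmin : ∀ B : Set ℕ, B.Finite → SuppOn x B → ↑S ⊆ B := by
    intro B hBfin hB
    have hB' : SuppOn x ↑hBfin.toFinset := by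
      rw [Set.Finite.coe_toFinset]; exact hB
    have hinter : SuppOn x ↑(S ∩ hBfin.toFinset) := suppOn_inter x S _ hS hB'
    have h1 : Nat.find hex ≤ (S ∩ hBfin.toFinset).card :=
      Nat.find_le ⟨S ∩ hBfin.toFinset, rfl, hinter⟩
    have h2 : (S ∩ hBfin.toFinset).card ≤ S.card :=
      Finset.card_le_card (Finset.inter_subset_left)
    have heq : S ∩ hBfin.toFinset = S :=
      Finset.eq_of_subset_of_card_le Finset.inter_subset_left (by omega)
    intro a ha
    have haS : a ∈ S := by exact_mod_cast ha
    rw [← heq] at haS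
    have := (Finset.mem_inter.mp haS).2
    rw [Set.Finite.mem_toFinset] at this
    exact this
  have hsupp : supp x = ↑S := by
    rw [supp, if_pos hx]
    apply Set.Subset.antisymm
    · exact Set.sInter_subset_of_mem ⟨S.finite_toSet, hS⟩
    · exact Set.subset_sInter fun B hB => hmin B hB.1 hB.2
  exact smul_eq_of_agree_on_finset x S hS f g fun a ha => h a (hsupp ▸ (by exact_mod_cast ha))
end

section
/- Let W be a tame M-set (every element finitely supported) and f ∈ M. Then the action map x ↦ f·x is an injective self-map of W. -/
/-- Any injection, restricted to a finite set, admits a permutation of `ℕ`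
as a left inverse on that set. -/
theorem exists_left_inverse_perm (f : ℕ → ℕ) (hf : Function.Injective f) (S : Finset ℕ) :
    ∃ g : Equiv.Perm ℕ, ∀ s ∈ S, g (f s) = s := by
  classical
  set sS : Set ℕ := ↑S
  set T : Set ℕ := f '' sS
  have hsF : sS.Finite := S.finite_toSet
  have hTF : T.Finite := hsF.image f
  have h1 : Infinite ↥sSᶜ := (Set.Finite.infinite_compl hsF).to_subtype
  have h2 : Infinite ↥Tᶜ := (Set.Finite.infinite_compl hTF).to_subtype
  obtain ⟨e'⟩ : Nonempty (↥sSᶜ ≃ ↥Tᶜ) := nonempty_equiv_of_countable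
  let e : ↥sS ≃ ↥T := Equiv.Set.image f sS hf
  let π : Equiv.Perm ℕ :=
    (Equiv.Set.sumCompl sS).symm.trans ((e.sumCongr e').trans (Equiv.Set.sumCompl T))
  have hπ : ∀ s ∈ S, π s = f s := by
    intro s hs
    have : (Equiv.Set.sumCompl sS).symm s = Sum.inl ⟨s, hs⟩ :=
      Equiv.Set.sumCompl_symm_apply (s := sS) (x := ⟨s, hs⟩)
    simp only [π, Equiv.trans_apply, this, Equiv.sumCongr_apply, Sum.map_inl,
      Equiv.Set.sumCompl_apply_inl]
    rfl
  exact ⟨π.symm, fun s hs => by rw [← hπ s hs, Equiv.symm_apply_apply]⟩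

/-- On a tame `M`-set, every `f ∈ M` acts injectively. -/
theorem smul_injective_of_tame {W : Type*} [MulAction M W]
    (hW : ∀ x : W, FinSupp x) (f : M) :
    Function.Injective (fun x : W => f • x) := by
  intro x y hxy
  obtain ⟨A, hA⟩ := hW x
  obtain ⟨B, hB⟩ := hW y
  obtain ⟨π, hπ⟩ := exists_left_inverse_perm f.1 f.2 (A ∪ B)
  let g : M := ⟨(π : ℕ → ℕ), π.injective⟩
  have hx : (g * f) • x = x :=
    hA (g * f) fun a ha => hπ a (Finset.mem_union_left _ ha)
  have hy : (g * f) • y = y :=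
    hB (g * f) fun a ha => hπ a (Finset.mem_union_right _ ha)
  calc x = (g * f) • x := hx.symm
    _ = g • (f • x) := mul_smul g f x
    _ = g • (f • y) := by rw [show f • x = f • y from hxy]
    _ = (g * f) • y := (mul_smul g f y).symm
    _ = y := hy
end

section
/- There exists an M-set (a set with an action of the monoid M of injective self-maps of ω) and an element f ∈ M such that the action of f is not an injective map; concretely, on the set {0,1} with f acting as the identity if ω \ f(ω) is finite and as the constant map to 0 if ω \ f(ω) is infinite, the action is a valid M-action that is not injective for any f with infinite complementary image. -/
/-- The action of `f ∈ M` on `Bool` ("the set {0,1}", with `false` playing the role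
of `0`): the identity if the complement of the image of `f` is finite, and the
constant map to `0` otherwise. -/
noncomputable def badAct (f : M) (b : Bool) : Bool :=
  open Classical in if (Set.range f.1)ᶜ.Finite then b else false

-- For injective `f`, `(range (f ∘ g))ᶜ = (range f)ᶜ ∪ f '' (range g)ᶜ`, a disjoint union.
theorem Function.Injective.finite_compl_range_comp_iff {α β γ : Type*} {f : β → γ} {g : α → β}
    (hf : Function.Injective f) :
    (Set.range (f ∘ g))ᶜ.Finite ↔ (Set.range f)ᶜ.Finite ∧ (Set.range g)ᶜ.Finite := by
  rw [Set.range_comp, hf.compl_image_eq, Set.finite_union, Set.finite_image_iff hf.injOn, and_comm]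

theorem finite_compl_range_mul_iff (f g : M) :
    (Set.range (f * g).1)ᶜ.Finite ↔ (Set.range f.1)ᶜ.Finite ∧ (Set.range g.1)ᶜ.Finite :=
  Function.Injective.finite_compl_range_comp_iff f.2

theorem badAct_of_finite {f : M} (hf : (Set.range f.1)ᶜ.Finite) : badAct f = id :=
  funext fun _ => if_pos hf

theorem badAct_of_infinite {f : M} (hf : (Set.range f.1)ᶜ.Infinite) :
    badAct f = fun _ => false :=
  funext fun _ => if_neg hf

theorem badAct_one : badAct 1 = id :=
  badAct_of_finite <| by
    rw [show (1 : M).1 = id from rfl, Set.range_id, Set.compl_univ]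
    exact Set.finite_empty

theorem badAct_false (f : M) : badAct f false = false :=
  ite_self false

theorem badAct_mul (f g : M) (b : Bool) : badAct (f * g) b = badAct f (badAct g b) := by
  by_cases hfg : (Set.range (f * g).1)ᶜ.Finite
  · obtain ⟨hf, hg⟩ := (finite_compl_range_mul_iff f g).1 hfg
    simp only [badAct_of_finite hfg, badAct_of_finite hf, badAct_of_finite hg, id]
  · rw [badAct_of_infinite hfg]
    rw [finite_compl_range_mul_iff, not_and_or] at hfg
    rcases hfg with hf | hg
    · rw [badAct_of_infinite hf]
    · rw [badAct_of_infinite hg, badAct_false]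

/-- `badAct` is a genuine (non-tame) `M`-action on a two-element set for which the
action of every `f` with infinite complementary image fails to be injective. -/
theorem exists_nontame_M_set_with_noninjective_action :
    (∀ b, badAct 1 b = b) ∧
    (∀ f g : M, ∀ b, badAct (f * g) b = badAct f (badAct g b)) ∧
    (∀ f : M, (Set.range f.1)ᶜ.Finite → badAct f = id) ∧
    (∀ f : M, (Set.range f.1)ᶜ.Infinite → badAct f = fun _ => false) ∧
    (∀ f : M, (Set.range f.1)ᶜ.Infinite → ¬ Function.Injective (badAct f)) := by
  refine ⟨fun b => congrFun badAct_one b, badAct_mul, fun _ => badAct_of_finite,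
    fun _ => badAct_of_infinite, fun f hf hinj => ?_⟩
  have : badAct f true = badAct f false := by rw [badAct_of_infinite hf]
  exact Bool.noConfusion (hinj this)
end

section
/- For every M-set W, the subset W_τ of finitely supported elements is closed under the M-action, and the assignment W ↦ W_τ is right adjoint to the inclusion of the category of tame M-sets into the category of all M-sets. -/
lemma exists_perm (h : ℕ → ℕ) (hinj : Function.Injective h) (A : Finset ℕ) :
    ∃ e : Equiv.Perm ℕ, ∀ a ∈ A, e (h a) = a := by
  classical
  set B : Set ℕ := h '' (A : Set ℕ) with hB
  let e₁ : B ≃ (A : Set ℕ) := (Equiv.Set.image h (A : Set ℕ) hinj).symm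
  have hBc : Bᶜ.Infinite := Set.Finite.infinite_compl (((A : Set ℕ).toFinite).image h)
  have hAc : ((A : Set ℕ)ᶜ).Infinite := Set.Finite.infinite_compl (A : Set ℕ).toFinite
  have i1 : Infinite ↥Bᶜ := hBc.to_subtype
  have i2 : Infinite ↥((A : Set ℕ)ᶜ) := hAc.to_subtype
  have d1 : Denumerable ↥Bᶜ := Classical.choice (nonempty_denumerable _)
  have d2 : Denumerable ↥((A : Set ℕ)ᶜ) := Classical.choice (nonempty_denumerable _)
  let e₂ : ↥Bᶜ ≃ ↥((A : Set ℕ)ᶜ) := (d1.eqv).trans (d2.eqv).symm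
  refine ⟨(Equiv.Set.sumCompl B).symm.trans ((e₁.sumCongr e₂).trans
    (Equiv.Set.sumCompl (A : Set ℕ))), ?_⟩
  intro a ha
  have hmem : h a ∈ B := ⟨a, ha, rfl⟩
  have h1 : (Equiv.Set.sumCompl B).symm (h a) = Sum.inl ⟨h a, hmem⟩ :=
    by exact Equiv.Set.sumCompl_symm_apply (s := B) (x := ⟨h a, hmem⟩)
  have h2 : e₁ ⟨h a, hmem⟩ = ⟨a, ha⟩ := by
    apply (Equiv.Set.image h (A : Set ℕ) hinj).injective
    simp only [e₁, Equiv.apply_symm_apply]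
    rfl
  simp only [Equiv.trans_apply, h1, Equiv.sumCongr_apply, Sum.map_inl, h2,
    Equiv.Set.sumCompl_apply_inl]

lemma agree_smul {W : Type*} [MulAction M W] (x : W) (A : Finset ℕ)
    (hx : SuppOn x (A : Set ℕ)) (h₁ h₂ : M) (hagr : ∀ a ∈ A, h₁.1 a = h₂.1 a) :
    h₁ • x = h₂ • x := by
  obtain ⟨e, he⟩ := exists_perm h₁.1 h₁.2 A
  let k : M := ⟨(e : ℕ → ℕ), e.injective⟩
  let k' : M := ⟨(e.symm : ℕ → ℕ), e.symm.injective⟩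
  have hk1 : (k * h₁) • x = x := by
    apply hx
    intro a ha
    exact he a ha
  have hk2 : (k * h₂) • x = x := by
    apply hx
    intro a ha
    show e (h₂.1 a) = a
    rw [← hagr a ha]
    exact he a ha
  have h3 : k • (h₁ • x) = k • (h₂ • x) := by
    rw [← mul_smul, ← mul_smul, hk1, hk2]
  have h4 : k' * k = 1 := by
    apply Subtype.ext
    funext n
    exact e.symm_apply_apply n
  calc h₁ • x = (k' * k) • (h₁ • x) := by rw [h4, one_smul]
    _ = k' • (k • (h₁ • x)) := mul_smul _ _ _
    _ = k' • (k • (h₂ • x)) := by rw [h3]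
    _ = (k' * k) • (h₂ • x) := (mul_smul _ _ _).symm
    _ = h₂ • x := by rw [h4, one_smul]

/-- For any `M`-set `W`, the subset `W_τ` of finitely supported elements is closed
under the `M`-action, and `(-)_τ` is right adjoint to the inclusion of tame `M`-sets
into `M`-sets: for every tame `M`-set `V`, composition with the inclusion `W_τ → W`
is a bijection between equivariant maps `V → W_τ` and equivariant maps `V → W`. -/
theorem tau_closed_and_right_adjoint {W : Type*} [MulAction M W] :
    (∀ (f : M) (x : W), FinSupp x → FinSupp (f • x)) ∧
    (∀ (V : Type*) [MulAction M V], (∀ v : V, FinSupp v) →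
      Function.Bijective
        (fun u : {u : V → W // (∀ (f : M) (v : V), u (f • v) = f • u v) ∧
            ∀ v : V, FinSupp (u v)} =>
          (⟨u.1, u.2.1⟩ : {u : V → W // ∀ (f : M) (v : V), u (f • v) = f • u v}))) := by
  constructor
  · rintro f x ⟨A, hA⟩
    classical
    refine ⟨A.image f.1, ?_⟩
    intro g hg
    have : (g * f) • x = f • x := by
      apply agree_smul x A hA
      intro a ha
      exact hg (f.1 a) (Finset.mem_image_of_mem _ ha)
    rwa [mul_smul] at this
  · intro V _ hV
    constructor
    · intro u₁ u₂ h
      have := congrArg Subtype.val h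
      exact Subtype.ext this

    · rintro ⟨u, hu⟩
      refine ⟨⟨u, hu, fun v => ?_⟩, rfl⟩
      obtain ⟨A, hA⟩ := hV v
      exact ⟨A, fun f hf => by rw [← hu f v, hA f hf]⟩
end

section
/- Let A be a finite subset of ω and let ι_A : A → ω be the inclusion. For every M-set W, the evaluation map Hom_M(I_A, W) → {x ∈ W : supp(x) ⊆ A}, φ ↦ φ(ι_A), is a bijection; i.e. the M-set I_A of injections A → ω (with M acting by postcomposition) represents the functor of elements supported on A. -/
/-- The `M`-set `I_A` of injections `A → ℕ`, with `M` acting by postcomposition. -/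
def IA (A : Finset ℕ) : Type := {α : A → ℕ // Function.Injective α}

instance (A : Finset ℕ) : MulAction M (IA A) where
  smul f α := ⟨f.1 ∘ α.1, f.2.comp α.2⟩
  one_smul α := rfl
  mul_smul f g α := rfl

/-- The inclusion `ι_A : A → ℕ`, as an element of `I_A`. -/
def iotaA (A : Finset ℕ) : IA A := ⟨fun a => (a : ℕ), fun _ _ h => Subtype.ext h⟩

/-!
Every injection `α : A → ℕ` is the restriction of a permutation `π` of `ℕ`, so `I_A` is the
orbit of `ι_A`, and an equivariant map is determined by its value at `ι_A`. Conversely, if `x`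
is supported on `A` then `g • x` only depends on `g` restricted to `A`: for a permutation `π`
agreeing with `g` on `A`, the map `π⁻¹ ∘ g` fixes `A`, so `g • x = π • (π⁻¹ ∘ g) • x = π • x`.
Hence `α ↦ g_α • x`, for any `g_α ∈ M` extending `α`, is a well-defined equivariant map.
-/

theorem Function.Embedding.exists_perm_extend {α : Type*} [Infinite α] {s : Set α} [Finite s]
    (f : s ↪ α) : ∃ π : Equiv.Perm α, ∀ x : s, π x = f x :=
  Cardinal.extend_function_of_lt f (Cardinal.mk_lt_aleph0.trans_le (Cardinal.aleph0_le_mk α))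
    ⟨Equiv.refl α⟩

theorem SuppOn.smul_eq_of_eqOn {W : Type*} [MulAction M W] {x : W} {A : Set ℕ} [Finite A]
    (hx : SuppOn x A) {g g' : M} (h : Set.EqOn g.1 g'.1 A) : g • x = g' • x := by
  obtain ⟨π, hπ⟩ := Function.Embedding.exists_perm_extend
    ⟨A.domRestrict g.1, g.2.comp Subtype.val_injective⟩
  let P : M := ⟨⇑π, π.injective⟩
  have smul_eq_P_smul : ∀ k : M, Set.EqOn k.1 g.1 A → k • x = P • x := by
    intro k hk
    let Q : M := ⟨⇑π.symm, π.symm.injective⟩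
    have hQk : (Q * k) • x = x := hx (Q * k) fun a ha => by
      show π.symm (k.1 a) = a
      rw [π.symm_apply_eq]
      exact ((hπ ⟨a, ha⟩).trans (hk ha).symm).symm
    have hPQk : P * (Q * k) = k := Subtype.ext (funext fun n => π.apply_symm_apply (k.1 n))
    rw [← hPQk, mul_smul, hQk]
  rw [smul_eq_P_smul g fun _ _ => rfl, smul_eq_P_smul g' h.symm]

theorem SuppOn.map {X W : Type*} [MulAction M X] [MulAction M W] {x : X} {A : Set ℕ}
    (hx : SuppOn x A) (φ : X → W) (hφ : ∀ (f : M) (y : X), φ (f • y) = f • φ y) :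
    SuppOn (φ x) A := fun f hf => by
  rw [← hφ, hx f hf]

namespace IA

variable {A : Finset ℕ}

theorem suppOn_iotaA : SuppOn (iotaA A) ↑A := fun _ hf =>
  Subtype.ext (funext fun a => hf a a.2)

noncomputable def extend (α : IA A) : M :=
  let π := (Function.Embedding.exists_perm_extend (s := (A : Set ℕ)) ⟨α.1, α.2⟩).choose
  ⟨⇑π, π.injective⟩

theorem extend_apply (α : IA A) (a : A) : (extend α).1 a = α.1 a :=
  (Function.Embedding.exists_perm_extend (s := (A : Set ℕ)) ⟨α.1, α.2⟩).choose_spec a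

theorem extend_smul_iotaA (α : IA A) : extend α • iotaA A = α :=
  Subtype.ext (funext (extend_apply α))

theorem equivariant_ext {W : Type*} [MulAction M W] {φ ψ : IA A → W}
    (hφ : ∀ (f : M) (α : IA A), φ (f • α) = f • φ α)
    (hψ : ∀ (f : M) (α : IA A), ψ (f • α) = f • ψ α) (h : φ (iotaA A) = ψ (iotaA A)) :
    φ = ψ := funext fun α => by
  rw [← extend_smul_iotaA α, hφ, hψ, h]

noncomputable def lift {W : Type*} [MulAction M W] (x : W) (α : IA A) : W := extend α • x

variable {W : Type*} [MulAction M W] {x : W}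

theorem lift_smul (hx : SuppOn x ↑A) (f : M) (α : IA A) : lift x (f • α) = f • lift x α := by
  rw [lift, lift, ← mul_smul]
  exact hx.smul_eq_of_eqOn fun a ha => by
    simp only [Submonoid.coe_mul, Function.End.mul_def]
    exact (extend_apply (f • α) ⟨a, ha⟩).trans (congrArg f.1 (extend_apply α ⟨a, ha⟩).symm)

theorem lift_iotaA (hx : SuppOn x ↑A) : lift x (iotaA A) = x := by
  rw [lift, hx.smul_eq_of_eqOn (g' := 1) fun a ha => extend_apply (iotaA A) ⟨a, ha⟩, one_smul]

end IA

/-- `I_A` represents the functor of elements supported on `A`: for every `M`-set `W`,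
evaluation at `ι_A` is injective on equivariant maps `I_A → W`, with image exactly
the elements supported on `A`. -/
theorem IA_represents_suppOn (A : Finset ℕ) {W : Type*} [MulAction M W] :
    Function.Injective
      (fun φ : {φ : IA A → W // ∀ (f : M) (α : IA A), φ (f • α) = f • φ α} =>
        φ.1 (iotaA A)) ∧
    Set.range
      (fun φ : {φ : IA A → W // ∀ (f : M) (α : IA A), φ (f • α) = f • φ α} =>
        φ.1 (iotaA A)) = {x : W | SuppOn x ↑A} := by
  refine ⟨fun φ ψ h => Subtype.ext (IA.equivariant_ext φ.2 ψ.2 h), ?_⟩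
  ext x
  constructor
  · rintro ⟨φ, rfl⟩
    exact IA.suppOn_iotaA.map φ.1 φ.2
  · intro hx
    exact ⟨⟨IA.lift x, IA.lift_smul hx⟩, IA.lift_iotaA hx⟩
end

section
/- Let W be a tame M-set and m ≥ 0. Let s_m(W) be the set of elements of W whose support is exactly {1,...,m}, with its Σ_m-action. Then the map ψ_m : I_m ×_{Σ_m} s_m(W) → W given by [α, x] ↦ α̃·x (where α̃ ∈ M is any extension of the injection α : {1,...,m} → ω) is well-defined, and the maps ψ_m for all m ≥ 0 assemble into an isomorphism of M-sets ⨿_{m≥0} I_m ×_{Σ_m} s_m(W) ≅ W. -/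
/-- The `M`-set `I_m` of injections `{1,…,m} → ω` (here `Fin m → ℕ`),
with `M` acting by postcomposition. -/
def Im (m : ℕ) : Type := {α : Fin m → ℕ // Function.Injective α}

instance (m : ℕ) : MulAction M (Im m) where
  smul f α := ⟨f.1 ∘ α.1, f.2.comp α.2⟩
  one_smul _ := rfl
  mul_smul _ _ _ := rfl

/-- The set of elements of `W` with support exactly `{1,…,m}` (here `Set.Iio m`). -/
def smSet (W : Type*) [MulAction M W] (m : ℕ) : Set W := {x | supp x = Set.Iio m}

/-- The relation identifying `(α ∘ σ, x)` with `(α, σ • x)` for `σ ∈ Σ_m`,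
where `σ` acts on `x` via any extension of `σ` to an element of `M`. -/
def smRel (W : Type*) [MulAction M W] (m : ℕ) :
    (Im m × smSet W m) → (Im m × smSet W m) → Prop :=
  fun p q => ∃ σ : Equiv.Perm (Fin m),
    (∀ i, p.1.1 i = q.1.1 (σ i)) ∧
    ∀ g : M, (∀ i : Fin m, g.1 i.1 = (σ i).1) → g • (p.2 : W) = (q.2 : W)

namespace TameAux

def toM (π : Equiv.Perm ℕ) : M := ⟨(π : ℕ → ℕ), π.injective⟩

lemma toM_apply (π : Equiv.Perm ℕ) (n : ℕ) : (toM π).1 n = π n := rfl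

lemma toM_mul (π ρ : Equiv.Perm ℕ) : toM π * toM ρ = toM (ρ.trans π) := rfl

lemma toM_mul_symm (π : Equiv.Perm ℕ) : toM π * toM π.symm = 1 :=
  Subtype.ext (funext fun n => π.apply_symm_apply n)

lemma toM_symm_mul (π : Equiv.Perm ℕ) : toM π.symm * toM π = 1 :=
  Subtype.ext (funext fun n => π.symm_apply_apply n)

variable {W : Type*} [MulAction M W]

lemma smul_symm_smul (π : Equiv.Perm ℕ) (x : W) : toM π.symm • toM π • x = x := by
  rw [← mul_smul, toM_symm_mul, one_smul]

lemma smul_smul_symm (π : Equiv.Perm ℕ) (x : W) : toM π • toM π.symm • x = x := by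
  rw [← mul_smul, toM_mul_symm, one_smul]

lemma suppOn_mono {x : W} {A B : Set ℕ} (h : SuppOn x A) (hAB : A ⊆ B) : SuppOn x B :=
  fun f hf => h f fun a ha => hf a (hAB ha)

lemma suppOn_perm_smul {x : W} {A : Set ℕ} (h : SuppOn x A) (π : Equiv.Perm ℕ) :
    SuppOn (toM π • x) (π '' A) := by
  intro f hf
  have key : (toM π.symm * f * toM π) • x = x := by
    apply h
    intro a ha
    have h1 : f.1 (π a) = π a := hf (π a) ⟨a, ha, rfl⟩
    show π.symm (f.1 (π a)) = a
    rw [h1, π.symm_apply_apply]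
  have := congrArg (fun y : W => toM π • y) key
  calc f • toM π • x = (toM π * (toM π.symm * f * toM π)) • x := by
        rw [← mul_assoc, ← mul_assoc, toM_mul_symm, one_mul, mul_smul]
  _ = toM π • x := by rw [mul_smul, key]

/-- Extend an injective-on-a-finite-set map to a permutation of ℕ. -/
lemma exists_perm_extend (A : Finset ℕ) (f : ℕ → ℕ) (hf : Set.InjOn f ↑A) :
    ∃ π : Equiv.Perm ℕ, ∀ a ∈ A, π a = f a := by
  classical
  set s : Set ℕ := ↑A with hs_def
  have hs : s.Finite := A.finite_toSet
  have ht : (f '' s).Finite := hs.image f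
  have hsc : sᶜ.Infinite := hs.infinite_compl
  have htc : (f '' s)ᶜ.Infinite := ht.infinite_compl
  have hbij : Function.Bijective (fun p : ↥s => (⟨f p.1, ⟨p.1, p.2, rfl⟩⟩ : ↥(f '' s))) := by
    constructor
    · intro p q hpq
      exact Subtype.ext (hf p.2 q.2 (congrArg Subtype.val hpq))
    · rintro ⟨_, a, ha, rfl⟩
      exact ⟨⟨a, ha⟩, rfl⟩
  let e1 : ↥s ≃ ↥(f '' s) := Equiv.ofBijective _ hbij
  have hi1 : Infinite ↥sᶜ := hsc.to_subtype
  have hi2 : Infinite ↥(f '' s)ᶜ := htc.to_subtype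
  obtain ⟨e2⟩ : Nonempty (↥sᶜ ≃ ↥(f '' s)ᶜ) := nonempty_equiv_of_countable
  refine ⟨(Equiv.Set.sumCompl s).symm.trans ((e1.sumCongr e2).trans
    (Equiv.Set.sumCompl (f '' s))), ?_⟩
  intro a ha
  have has : a ∈ s := ha
  simp only [Equiv.trans_apply, Equiv.Set.sumCompl_symm_apply_of_mem has,
    Equiv.sumCongr_apply, Sum.map_inl, Equiv.Set.sumCompl_apply_inl]
  rfl

lemma exists_perm_extend_fin {m : ℕ} (α : Fin m → ℕ) (hα : Function.Injective α) :
    ∃ π : Equiv.Perm ℕ, ∀ i : Fin m, π i.1 = α i := by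
  classical
  have hinj : Set.InjOn (fun n => if h : n < m then α ⟨n, h⟩ else 0) ↑(Finset.range m) := by
    intro a ha b hb hab
    simp only [Finset.coe_range, Set.mem_Iio] at ha hb
    simp only [dif_pos ha, dif_pos hb] at hab
    exact congrArg Fin.val (hα hab)
  obtain ⟨π, hπ⟩ := exists_perm_extend (Finset.range m)
      (fun n => if h : n < m then α ⟨n, h⟩ else 0) hinj
  refine ⟨π, fun i => ?_⟩
  have := hπ i.1 (Finset.mem_range.2 i.2)
  simpa [i.2] using this

lemma smul_eq_perm_smul {x : W} {A : Finset ℕ} (h : SuppOn x ↑A) (f : M) (π : Equiv.Perm ℕ)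
    (hagree : ∀ a ∈ A, f.1 a = π a) : f • x = toM π • x := by
  have h1 : SuppOn (toM π • x) (π '' ↑A) := suppOn_perm_smul h π
  have h2 : (f * toM π.symm) • (toM π • x) = toM π • x := by
    apply h1
    rintro b ⟨a, ha, rfl⟩
    show f.1 (π.symm (π a)) = π a
    rw [π.symm_apply_apply]
    exact hagree a ha
  calc f • x = f • toM π.symm • toM π • x := by rw [smul_symm_smul]
  _ = (f * toM π.symm) • (toM π • x) := (mul_smul _ _ _).symm
  _ = toM π • x := h2

lemma smul_eq_of_agree {x : W} {A : Finset ℕ} (h : SuppOn x ↑A) (f g : M)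
    (hfg : ∀ a ∈ A, f.1 a = g.1 a) : f • x = g • x := by
  have hinj : Set.InjOn g.1 ↑A := fun a _ b _ hab => g.2 hab
  obtain ⟨π, hπ⟩ := exists_perm_extend A g.1 hinj
  rw [smul_eq_perm_smul h f π (fun a ha => (hfg a ha).trans (hπ a ha).symm),
      smul_eq_perm_smul h g π (fun a ha => (hπ a ha).symm)]

lemma suppOn_inter {x : W} {A B : Finset ℕ} (hA : SuppOn x ↑A) (hB : SuppOn x ↑B) :
    SuppOn x ↑(A ∩ B) := by
  classical
  intro f hf
  -- fresh finset F
  obtain ⟨F, hFsub, hFcard⟩ :=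
    ((A ∪ B ∪ A.image f.1).finite_toSet.infinite_compl).exists_subset_card_eq (B \ A).card
  have hFdisj : ∀ c ∈ F, c ∉ A ∧ c ∉ B ∧ c ∉ A.image f.1 := by
    intro c hc
    have := hFsub hc
    simp only [Set.mem_compl_iff, Finset.coe_union, Set.mem_union, Finset.mem_coe] at this
    push_neg at this
    exact ⟨this.1.1, this.1.2, this.2⟩
  set e : {x // x ∈ B \ A} ≃ {x // x ∈ F} := Finset.equivOfCardEq hFcard.symm with he
  -- permutation π : identity on A, maps B \ A into F
  set h1 : ℕ → ℕ := fun n => if hn : n ∈ B \ A then (e ⟨n, hn⟩ : ℕ) else n with hh1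
  have hinj1 : Set.InjOn h1 ↑(A ∪ B) := by
    intro a ha b hb hab
    simp only [hh1] at hab
    by_cases haB : a ∈ B \ A <;> by_cases hbB : b ∈ B \ A
    · rw [dif_pos haB, dif_pos hbB] at hab
      have := e.injective (Subtype.ext hab)
      exact congrArg Subtype.val this
    · rw [dif_pos haB, dif_neg hbB] at hab
      exfalso
      have hc : ((e ⟨a, haB⟩ : ℕ)) ∈ F := (e ⟨a, haB⟩).2
      rw [hab] at hc
      have := hFdisj _ hc
      rcases Finset.mem_union.1 (by exact_mod_cast hb) with h' | h'
      · exact this.1 h'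
      · exact this.2.1 h'
    · rw [dif_neg haB, dif_pos hbB] at hab
      have hc : ((e ⟨b, hbB⟩ : ℕ)) ∈ F := (e ⟨b, hbB⟩).2
      have := hFdisj _ hc
      rw [← hab] at this
      exfalso
      rcases Finset.mem_union.1 (by exact_mod_cast ha) with h' | h'
      · exact this.1 h'
      · exact this.2.1 h'
    · rw [dif_neg haB, dif_neg hbB] at hab
      exact hab
  obtain ⟨π, hπ⟩ := exists_perm_extend (A ∪ B) h1 hinj1
  have hπA : ∀ a ∈ A, π a = a := by
    intro a ha
    rw [hπ a (Finset.mem_union_left _ ha), hh1]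
    simp [Finset.mem_sdiff, ha]
  have hπx : toM π • x = x := hA (toM π) (fun a ha => hπA a ha)
  have hsupp2 : SuppOn x (π '' ↑B) := by
    have := suppOn_perm_smul hB π
    rwa [hπx] at this
  have himg : π '' ↑B ⊆ ↑((A ∩ B) ∪ F) := by
    rintro _ ⟨b, hb, rfl⟩
    have hbB : b ∈ B := hb
    by_cases hbA : b ∈ A
    · rw [hπA b hbA]
      simp [Finset.mem_union, Finset.mem_inter, hbA, hbB]
    · have hmem : b ∈ B \ A := Finset.mem_sdiff.2 ⟨hbB, hbA⟩
      rw [hπ b (Finset.mem_union_right _ hbB)]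
      simp only [hh1, dif_pos hmem]
      simp only [Finset.coe_union, Set.mem_union, Finset.mem_coe]
      exact Or.inr (e ⟨b, hmem⟩).2
  have hsupp3 : SuppOn x ↑((A ∩ B) ∪ F) := suppOn_mono hsupp2 himg
  -- now the map g agreeing with f on A and identity on F
  set k : ℕ → ℕ := fun n => if n ∈ A then f.1 n else n with hk
  have hinj2 : Set.InjOn k ↑(A ∪ F) := by
    intro a ha b hb hab
    simp only [hk] at hab
    by_cases haA : a ∈ A <;> by_cases hbA : b ∈ A
    · rw [if_pos haA, if_pos hbA] at hab
      exact f.2 hab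
    · rw [if_pos haA, if_neg hbA] at hab
      exfalso
      have hbF : b ∈ F := by
        rcases Finset.mem_union.1 (by exact_mod_cast hb) with h' | h'
        · exact absurd h' hbA
        · exact h'
      exact (hFdisj b hbF).2.2 (by rw [← hab]; exact Finset.mem_image_of_mem _ haA)
    · rw [if_neg haA, if_pos hbA] at hab
      exfalso
      have haF : a ∈ F := by
        rcases Finset.mem_union.1 (by exact_mod_cast ha) with h' | h'
        · exact absurd h' haA
        · exact h'
      exact (hFdisj a haF).2.2 (by rw [hab]; exact Finset.mem_image_of_mem _ hbA)
    · rw [if_neg haA, if_neg hbA] at hab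
      exact hab
  obtain ⟨g, hg⟩ := exists_perm_extend (A ∪ F) k hinj2
  have step1 : f • x = toM g • x := by
    apply smul_eq_perm_smul hA f g
    intro a ha
    rw [hg a (Finset.mem_union_left _ ha)]
    simp only [hk, if_pos ha]
  have step2 : toM g • x = x := by
    apply hsupp3 (toM g)
    intro a ha
    rcases Finset.mem_union.1 (by exact_mod_cast ha) with h' | h'
    · have haA : a ∈ A := Finset.mem_inter.1 h' |>.1
      have haB : a ∈ B := Finset.mem_inter.1 h' |>.2
      rw [toM_apply, hg a (Finset.mem_union_left _ haA)]
      simp only [hk, if_pos haA]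
      exact hf a (by exact_mod_cast h')
    · have haA : a ∉ A := (hFdisj a h').1
      rw [toM_apply, hg a (Finset.mem_union_right _ h')]
      simp only [hk, if_neg haA]
  rw [step1, step2]

lemma supp_eq {x : W} (h : FinSupp x) :
    supp x = ⋂₀ {A : Set ℕ | A.Finite ∧ SuppOn x A} := if_pos h

lemma supp_subset {x : W} (h : FinSupp x) {A : Set ℕ} (hA : A.Finite) (hs : SuppOn x A) :
    supp x ⊆ A := by
  rw [supp_eq h]; exact Set.sInter_subset_of_mem ⟨hA, hs⟩

lemma supp_finite {x : W} (h : FinSupp x) : (supp x).Finite := by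
  obtain ⟨A, hA⟩ := h
  exact A.finite_toSet.subset (supp_subset ⟨A, hA⟩ A.finite_toSet hA)

lemma suppOn_supp {x : W} (h : FinSupp x) : SuppOn x (supp x) := by
  classical
  obtain ⟨A₀, hA₀⟩ := h
  have hne : ∃ n, ∃ C : Finset ℕ, C.card = n ∧ SuppOn x ↑C := ⟨A₀.card, A₀, rfl, hA₀⟩
  obtain ⟨C, hCcard, hC⟩ := Nat.find_spec hne
  have hCsub : ∀ B : Set ℕ, B.Finite → SuppOn x B → ↑C ⊆ B := by
    intro B hBfin hB
    have hBf : SuppOn x ↑hBfin.toFinset := by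
      rw [Set.Finite.coe_toFinset]; exact hB
    have hint : SuppOn x ↑(C ∩ hBfin.toFinset) := suppOn_inter hC hBf
    have h1 : C.card ≤ (C ∩ hBfin.toFinset).card := by
      rw [hCcard]; exact Nat.find_le ⟨_, rfl, hint⟩
    have h2 : C ∩ hBfin.toFinset = C :=
      Finset.eq_of_subset_of_card_le Finset.inter_subset_left h1
    have : C ⊆ hBfin.toFinset := by
      rw [← h2]; exact Finset.inter_subset_right
    intro a ha
    rw [← Set.Finite.coe_toFinset hBfin]
    exact this ha
  have hsupp : supp x = ↑C := by
    apply Set.Subset.antisymm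
    · exact supp_subset ⟨A₀, hA₀⟩ C.finite_toSet hC
    · rw [supp_eq ⟨A₀, hA₀⟩]
      exact Set.subset_sInter fun B hB => hCsub B hB.1 hB.2
  rw [hsupp]; exact hC

lemma finSupp_perm_smul {x : W} (h : FinSupp x) (π : Equiv.Perm ℕ) : FinSupp (toM π • x) := by
  obtain ⟨A, hA⟩ := h
  refine ⟨A.image π, ?_⟩
  have := suppOn_perm_smul hA π
  rwa [← Finset.coe_image] at this

lemma supp_perm_smul {x : W} (h : FinSupp x) (π : Equiv.Perm ℕ) :
    supp (toM π • x) = π '' supp x := by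
  apply Set.Subset.antisymm
  · exact supp_subset (finSupp_perm_smul h π) ((supp_finite h).image _)
      (suppOn_perm_smul (suppOn_supp h) π)
  · rintro _ ⟨b, hb, rfl⟩
    rw [supp_eq (finSupp_perm_smul h π)]
    intro B hB
    obtain ⟨hBfin, hBsupp⟩ := hB
    have hsym : SuppOn x (π.symm '' B) := by
      have := suppOn_perm_smul hBsupp π.symm
      rwa [smul_symm_smul] at this
    have hsub : supp x ⊆ π.symm '' B := supp_subset h (hBfin.image _) hsym
    obtain ⟨c, hc, hcb⟩ := hsub hb
    have : π b = c := by rw [← hcb, π.apply_symm_apply]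
    rwa [this]

end TameAux

open TameAux in

/-- For a tame `M`-set `W`, the maps `ψ_m : I_m ×_{Σ_m} s_m(W) → W`, `[α,x] ↦ α̃ • x`,
are well defined and assemble into an isomorphism of `M`-sets
`⨿_{m ≥ 0} I_m ×_{Σ_m} s_m(W) ≅ W`. -/
theorem tame_M_set_decomposition {W : Type*} [MulAction M W] (hW : ∀ x : W, FinSupp x) :
    ∃ Ψ : (Σ m : ℕ, Quot (smRel W m)) → W,
      (∀ (m : ℕ) (α : Im m) (x : smSet W m) (g : M),
        (∀ i : Fin m, g.1 i.1 = α.1 i) → Ψ ⟨m, Quot.mk _ (α, x)⟩ = g • (x : W)) ∧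
      Function.Bijective Ψ ∧
      (∀ (f : M) (m : ℕ) (α : Im m) (x : smSet W m),
        Ψ ⟨m, Quot.mk _ (f • α, x)⟩ = f • Ψ ⟨m, Quot.mk _ (α, x)⟩) := by
  classical
  choose pick pickSpec using fun (m : ℕ) (α : Im m) => exists_perm_extend_fin α.1 α.2
  have hsupp : ∀ (m : ℕ) (x : smSet W m), SuppOn (x : W) ↑(Finset.range m) := by
    intro m x
    have h := suppOn_supp (hW (x : W))
    rw [x.2] at h
    rwa [Finset.coe_range]
  set ψ₀ : ∀ m : ℕ, Im m × smSet W m → W := fun m p => toM (pick m p.1) • (p.2 : W) with hψ₀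
  have hresp : ∀ (m : ℕ) (p q : Im m × smSet W m), smRel W m p q → ψ₀ m p = ψ₀ m q := by
    rintro m ⟨α, x⟩ ⟨β, y⟩ ⟨σ, hσ1, hσ2⟩
    have hσinj : Function.Injective (fun i : Fin m => ((σ i : Fin m) : ℕ)) := by
      intro i j hij
      exact σ.injective (Fin.val_injective hij)
    obtain ⟨s, hs⟩ := exists_perm_extend_fin _ hσinj
    have hsx : toM s • (x : W) = (y : W) := hσ2 (toM s) (fun i => hs i)
    show toM (pick m α) • (x : W) = toM (pick m β) • (y : W)
    rw [← hsx, ← mul_smul, toM_mul]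
    apply smul_eq_perm_smul (hsupp m x) (toM (pick m α)) (s.trans (pick m β))
    intro a ha
    have ham : a < m := Finset.mem_range.1 ha
    have h1 : (toM (pick m α)).1 a = α.1 ⟨a, ham⟩ := pickSpec m α ⟨a, ham⟩
    have h2 : (s.trans (pick m β)) a = β.1 (σ ⟨a, ham⟩) := by
      have hsa : s a = ((σ ⟨a, ham⟩ : Fin m) : ℕ) := hs ⟨a, ham⟩
      show pick m β (s a) = β.1 (σ ⟨a, ham⟩)
      rw [hsa]
      exact pickSpec m β (σ ⟨a, ham⟩)
    rw [h1, h2, hσ1]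
  refine ⟨fun p => Quot.lift (ψ₀ p.1) (hresp p.1) p.2, ?_, ⟨?_, ?_⟩, ?_⟩
  · -- property 1
    intro m α x g hg
    show ψ₀ m (α, x) = g • (x : W)
    refine (smul_eq_perm_smul (hsupp m x) g (pick m α) ?_).symm
    intro a ha
    have ham : a < m := Finset.mem_range.1 ha
    rw [hg ⟨a, ham⟩]
    exact (pickSpec m α ⟨a, ham⟩).symm
  · -- injective
    rintro ⟨m, u⟩ ⟨n, v⟩ h
    obtain ⟨⟨α, x⟩, rfl⟩ := Quot.exists_rep u
    obtain ⟨⟨β, y⟩, rfl⟩ := Quot.exists_rep v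
    have hxy : toM (pick m α) • (x : W) = toM (pick n β) • (y : W) := h
    have h1 : supp (toM (pick m α) • (x : W)) = ⇑(pick m α) '' Set.Iio m := by
      rw [supp_perm_smul (hW (x : W)) (pick m α), x.2]
    have h2 : supp (toM (pick n β) • (y : W)) = ⇑(pick n β) '' Set.Iio n := by
      rw [supp_perm_smul (hW (y : W)) (pick n β), y.2]
    have him : ⇑(pick m α) '' Set.Iio m = ⇑(pick n β) '' Set.Iio n := by
      rw [← h1, hxy, h2]
    have hmn : m = n := by
      have hc := congrArg Set.ncard him
      rwa [Set.ncard_image_of_injective _ (pick m α).injective,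
        Set.ncard_image_of_injective _ (pick n β).injective,
        ← Finset.coe_range, ← Finset.coe_range, Set.ncard_coe_finset, Set.ncard_coe_finset,
        Finset.card_range, Finset.card_range] at hc
    subst hmn
    have hmem : ∀ i : Fin m, ∃ j : Fin m, (pick m β) j.1 = (pick m α) i.1 := by
      intro i
      have : (pick m α) i.1 ∈ ⇑(pick m β) '' Set.Iio m := him ▸ ⟨i.1, i.2, rfl⟩
      obtain ⟨j, hj, hq⟩ := this
      exact ⟨⟨j, hj⟩, hq⟩
    choose σf hσf using hmem
    have hσinj : Function.Injective σf := by
      intro i j hij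
      have hp : (pick m α) i.1 = (pick m α) j.1 := by rw [← hσf i, ← hσf j, hij]
      exact Fin.val_injective ((pick m α).injective hp)
    let σ : Equiv.Perm (Fin m) := Equiv.ofBijective σf (Finite.injective_iff_bijective.1 hσinj)
    have hrel : smRel W m (α, x) (β, y) := by
      refine ⟨σ, ?_, ?_⟩
      · intro i
        have h1 : α.1 i = (pick m α) i.1 := (pickSpec m α i).symm
        have h2 : β.1 (σ i) = (pick m β) (σ i).1 := (pickSpec m β (σ i)).symm
        rw [h1, h2]
        exact (hσf i).symm
      · intro g hg
        show g • (x : W) = (y : W)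
        have hy : (y : W) = (toM (pick m β).symm * toM (pick m α)) • (x : W) := by
          rw [mul_smul, hxy, smul_symm_smul]
        rw [hy]
        apply smul_eq_of_agree (hsupp m x) g (toM (pick m β).symm * toM (pick m α))
        intro a ha
        have ham : a < m := Finset.mem_range.1 ha
        have h3 : (toM (pick m β).symm * toM (pick m α)).1 a = (σ ⟨a, ham⟩).1 := by
          show (pick m β).symm ((pick m α) a) = (σ ⟨a, ham⟩).1
          rw [← hσf ⟨a, ham⟩]
          exact (pick m β).symm_apply_apply _
        rw [h3]
        exact hg ⟨a, ham⟩
    exact congrArg (fun t => (⟨m, t⟩ : Σ k : ℕ, Quot (smRel W k))) (Quot.sound hrel)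
  · -- surjective
    intro x
    have hfs := hW x
    set Afin := (supp_finite hfs).toFinset with hAfin
    set k := Afin.card with hk
    let e : {a // a ∈ Afin} ≃ Fin k := Afin.equivFin
    have hinj : Set.InjOn (fun n => if h : n ∈ Afin then ((e ⟨n, h⟩ : Fin k) : ℕ) else 0) ↑Afin := by
      intro a ha b hb hab
      have ha' : a ∈ Afin := ha
      have hb' : b ∈ Afin := hb
      simp only [dif_pos ha', dif_pos hb'] at hab
      have := e.injective (Fin.val_injective hab)
      exact congrArg Subtype.val this
    obtain ⟨π, hπ⟩ := exists_perm_extend Afin _ hinj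
    have hπa : ∀ a (ha : a ∈ Afin), π a = ((e ⟨a, ha⟩ : Fin k) : ℕ) := by
      intro a ha
      rw [hπ a ha]
      simp only [dif_pos ha]
    have himg : ⇑π '' supp x = Set.Iio k := by
      have hcoe : supp x = ↑Afin := (Set.Finite.coe_toFinset _).symm
      rw [hcoe]
      apply Set.Subset.antisymm
      · rintro _ ⟨a, ha, rfl⟩
        have ha' : a ∈ Afin := ha
        rw [hπa a ha']
        exact (e ⟨a, ha'⟩).2
      · intro j hj
        refine ⟨(e.symm ⟨j, hj⟩ : ℕ), (e.symm ⟨j, hj⟩).2, ?_⟩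
        rw [hπa _ (e.symm ⟨j, hj⟩).2]
        rw [show (⟨(e.symm ⟨j, hj⟩ : ℕ), (e.symm ⟨j, hj⟩).2⟩ : {a // a ∈ Afin}) = e.symm ⟨j, hj⟩ from rfl,
          e.apply_symm_apply]
    have hx' : toM π • x ∈ smSet W k := by
      show supp (toM π • x) = Set.Iio k
      rw [supp_perm_smul hfs π, himg]
    refine ⟨⟨k, Quot.mk _ (⟨fun i => π.symm i.1, fun i j hij => Fin.val_injective (π.symm.injective hij)⟩,
      ⟨toM π • x, hx'⟩)⟩, ?_⟩
    show ψ₀ k _ = x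
    have := smul_eq_perm_smul (W := W) (A := Finset.range k) (hsupp k ⟨toM π • x, hx'⟩)
      (toM π.symm) (pick k ⟨fun i => π.symm i.1, fun i j hij => Fin.val_injective (π.symm.injective hij)⟩)
      ?_
    · calc ψ₀ k _ = toM (pick k _) • (toM π • x) := rfl
      _ = toM π.symm • toM π • x := this.symm
      _ = x := smul_symm_smul π x
    · intro a ha
      have ham : a < k := Finset.mem_range.1 ha
      show π.symm a = _
      exact (pickSpec k ⟨fun i => π.symm i.1,
        fun i j hij => Fin.val_injective (π.symm.injective hij)⟩ ⟨a, ham⟩).symm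
  · -- equivariance
    intro f m α x
    have hp1 : (fun p : Σ m : ℕ, Quot (smRel W m) => Quot.lift (ψ₀ p.1) (hresp p.1) p.2)
        ⟨m, Quot.mk _ (α, x)⟩ = toM (pick m α) • (x : W) := rfl
    have hfmul : ∀ i : Fin m, (f * toM (pick m α)).1 i.1 = (f • α).1 i := by
      intro i
      show f.1 ((pick m α) i.1) = f.1 (α.1 i)
      rw [pickSpec m α i]
    have hp2 : (fun p : Σ m : ℕ, Quot (smRel W m) => Quot.lift (ψ₀ p.1) (hresp p.1) p.2)
        ⟨m, Quot.mk _ (f • α, x)⟩ = (f * toM (pick m α)) • (x : W) := by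
      show ψ₀ m (f • α, x) = _
      exact smul_eq_perm_smul (hsupp m x) (f * toM (pick m α)) (pick m (f • α)) (by
        intro a ha
        have ham : a < m := Finset.mem_range.1 ha
        have := pickSpec m (f • α) ⟨a, ham⟩
        rw [hfmul ⟨a, ham⟩]
        exact this.symm) |>.symm
    rw [hp1, hp2, mul_smul]
end

section
/- Let X and Y be tame M-sets. There is a bijection of underlying sets X ⊠ Y ≅ X × Y that is natural with respect to M-equivariant maps in the variable Y. -/
/-- The box product `X ⊠ Y` as a subset of `X × Y`: pairs with disjoint supports. -/
def BoxSet (X Y : Type*) [MulAction M X] [MulAction M Y] : Set (X × Y) :=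
  {p | Disjoint (supp p.1) (supp p.2)}

/-!
For each `x` choose `f x ∈ M` whose range is the complement of the finite set `supp x`. Then
`(x, y) ↦ (x, f x • y)` maps `X × Y` bijectively onto `X ⊠ Y`: injections act injectively on
tame `M`-sets, and an element whose support misses `supp x` lies in the image of `f x • ·`.
This map visibly commutes with `id × u` for equivariant `u`, which gives the naturality.
The essential input is that the support of a finitely supported element is itself a support,
i.e. finite supports are closed under intersection. Every injection agrees with a permutation
on a given finite set, and permutations act invertibly; this is how each of these facts is
proved.
-/

open Function Set

def permToM : Equiv.Perm ℕ →* M where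
  toFun σ := ⟨(⇑σ : ℕ → ℕ), σ.injective⟩
  map_one' := rfl
  map_mul' _ _ := rfl

lemma isUnit_permToM (σ : Equiv.Perm ℕ) : IsUnit (permToM σ) :=
  (Group.isUnit σ).map permToM

lemma exists_perm_eqOn {T : Set ℕ} (hT : T.Finite) {v : ℕ → ℕ} (hv : InjOn v T) :
    ∃ σ : Equiv.Perm ℕ, EqOn σ v T := by
  obtain ⟨σ, hσ⟩ := Cardinal.extend_function_of_lt ⟨T.domRestrict v, hv.injective⟩
    (Cardinal.lt_aleph0_iff_set_finite.2 hT |>.trans_eq Cardinal.mk_nat.symm) ⟨Equiv.refl ℕ⟩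
  exact ⟨σ, fun t ht => hσ ⟨t, ht⟩⟩

lemma exists_eqOn_id_mapsTo_compl {A S : Set ℕ} (hA : A.Finite) (hS : S.Finite) :
    ∃ g : M, EqOn g.1 id A ∧ MapsTo g.1 Aᶜ Sᶜ := by
  classical
  obtain ⟨N, hN⟩ := (hA.union hS).bddAbove
  have hAN : ∀ a ∈ A, a ≤ N := fun a ha => hN (Or.inl ha)
  refine ⟨⟨fun n => if n ∈ A then n else n + N + 1, ?_⟩, fun a ha => if_pos ha, ?_⟩
  · intro m n h
    by_cases hm : m ∈ A <;> by_cases hn : n ∈ A <;> simp only [hm, hn, if_true, if_false] at h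
    · exact h
    · have := hAN m hm; omega
    · have := hAN n hn; omega
    · omega
  · intro n hn hnS
    have := hN (Or.inr hnS)
    simp only [if_neg hn] at this
    omega

lemma exists_range_eq_compl {S : Set ℕ} (hS : S.Finite) : ∃ f : M, range f.1 = Sᶜ :=
  ⟨⟨Nat.nth (· ∉ S), Nat.nth_injective hS.infinite_compl⟩,
    Nat.range_nth_of_infinite hS.infinite_compl⟩

section SuppOn

variable {W : Type*} [MulAction M W] {y : W} {A B : Set ℕ}

lemma SuppOn.smul_eq_permToM_smul (hA : SuppOn y A) {r : M} {σ : Equiv.Perm ℕ}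
    (hrσ : EqOn r.1 σ A) : r • y = permToM σ • y :=
  calc r • y = (permToM σ * (permToM σ⁻¹ * r)) • y := by
        rw [← mul_assoc, ← map_mul, mul_inv_cancel, map_one, one_mul]
    _ = permToM σ • y := by
        rw [mul_smul, hA _ fun a ha => ?_]
        show σ⁻¹ (r.1 a) = a
        rw [hrσ ha]
        exact σ.symm_apply_apply a

lemma SuppOn.smul_eq_of_eqOn_s12 (hA : SuppOn y A) (hAf : A.Finite) {p q : M}
    (hpq : EqOn p.1 q.1 A) : p • y = q • y := by
  obtain ⟨σ, hσ⟩ := exists_perm_eqOn hAf (p.2 : Injective p.1).injOn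
  rw [hA.smul_eq_permToM_smul hσ.symm, hA.smul_eq_permToM_smul (hpq.symm.trans hσ.symm)]

lemma smul_left_cancel_of_finSupp {z₁ z₂ : W} (h₁ : FinSupp z₁) (h₂ : FinSupp z₂)
    {r : M} (h : r • z₁ = r • z₂) : z₁ = z₂ := by
  obtain ⟨A₁, hA₁⟩ := h₁
  obtain ⟨A₂, hA₂⟩ := h₂
  obtain ⟨σ, hσ⟩ := exists_perm_eqOn (A₁ ∪ A₂).finite_toSet (r.2 : Injective r.1).injOn
  refine (isUnit_permToM σ).smul_left_cancel.1 ?_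
  rw [← hA₁.smul_eq_permToM_smul (hσ.symm.mono (by simp)),
    ← hA₂.smul_eq_permToM_smul (hσ.symm.mono (by simp)), h]

lemma SuppOn.smul (hA : SuppOn y A) (hAf : A.Finite) (h : M) : SuppOn (h • y) (h.1 '' A) := by
  intro g hg
  rw [← mul_smul]
  exact hA.smul_eq_of_eqOn_s12 hAf fun a ha => hg _ (mem_image_of_mem _ ha)

lemma SuppOn.inter (hA : SuppOn y A) (hB : SuppOn y B) (hAf : A.Finite) (hBf : B.Finite) :
    SuppOn y (A ∩ B) := by
  classical
  intro f hf
  obtain ⟨g, hgA, hg⟩ := exists_eqOn_id_mapsTo_compl hAf (hAf.union (hAf.image f.1))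
  -- `g` fixes `A` and moves `B \ A` to fresh points, so `g '' B` is a support of `y`
  -- on which `f` can be replaced by the identity
  have hC : SuppOn y (g.1 '' B) := by simpa only [hA g hgA] using hB.smul hBf g
  have hCA : ∀ c ∈ g.1 '' B, c ∈ A ∩ B ∨ c ∉ A ∪ f.1 '' A := by
    rintro _ ⟨b, hb, rfl⟩
    by_cases hbA : b ∈ A
    · exact Or.inl (by rw [hgA hbA]; exact ⟨hbA, hb⟩)
    · exact Or.inr (hg hbA)
  have hv : InjOn (A.piecewise (fun n => f.1 n) id) (A ∪ g.1 '' B \ A) := by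
    rw [injOn_union disjoint_sdiff_right]
    refine ⟨(f.2 : Injective f.1).injOn.congr (piecewise_eqOn A _ id).symm,
      injOn_id _ |>.congr ((piecewise_eqOn_compl A _ id).symm.mono fun _ hc => hc.2), ?_⟩
    rintro a ha c ⟨hcC, hcA⟩ hac
    rw [piecewise_eq_of_mem _ _ _ ha, piecewise_eq_of_notMem _ _ _ hcA] at hac
    exact ((hCA c hcC).resolve_left fun h => hcA h.1) (Or.inr ⟨a, ha, hac⟩)
  obtain ⟨σ, hσ⟩ := exists_perm_eqOn (hAf.union ((hBf.image _).sdiff)) hv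
  calc f • y = permToM σ • y :=
        hA.smul_eq_permToM_smul fun a ha =>
          ((hσ (Or.inl ha)).trans (piecewise_eq_of_mem _ _ _ ha)).symm
    _ = y := hC _ fun c hc => by
        by_cases hcA : c ∈ A
        · refine (hσ (Or.inl hcA)).trans ((piecewise_eq_of_mem _ _ _ hcA).trans (hf c ?_))
          exact (hCA c hc).resolve_right (not_not.2 (Or.inl hcA))
        · exact (hσ (Or.inr ⟨hc, hcA⟩)).trans (piecewise_eq_of_notMem _ _ _ hcA)

lemma supp_subset_of_suppOn (hAf : A.Finite) (hA : SuppOn y A) : supp y ⊆ A := by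
  have hy : FinSupp y := ⟨hAf.toFinset, by rwa [hAf.coe_toFinset]⟩
  rw [supp, if_pos hy]
  exact sInter_subset_of_mem ⟨hAf, hA⟩

lemma FinSupp.finite_supp (hy : FinSupp y) : (supp y).Finite :=
  let ⟨A, hA⟩ := hy
  A.finite_toSet.subset (supp_subset_of_suppOn A.finite_toSet hA)

lemma FinSupp.suppOn_supp (hy : FinSupp y) : SuppOn y (supp y) := by
  obtain ⟨T, hT⟩ := exists_minimal_of_wellFoundedLT (fun T : Finset ℕ => SuppOn y ↑T) hy
  suffices supp y = T from this ▸ hT.prop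
  refine (supp_subset_of_suppOn T.finite_toSet hT.prop).antisymm ?_
  rw [supp, if_pos hy]
  refine subset_sInter fun A ⟨hAf, hA⟩ => ?_
  have hTA : SuppOn y ↑(T ∩ hAf.toFinset) := by
    simpa using hT.prop.inter hA T.finite_toSet hAf
  intro t ht
  simpa using (Finset.mem_inter.1 (hT.le_of_le hTA Finset.inter_subset_left ht)).2

lemma FinSupp.supp_smul_subset (hy : FinSupp y) (f : M) : supp (f • y) ⊆ f.1 '' supp y :=
  supp_subset_of_suppOn (hy.finite_supp.image _) (hy.suppOn_supp.smul hy.finite_supp f)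

lemma FinSupp.exists_smul_eq (hy : FinSupp y) {f : M} (h : supp y ⊆ range f.1) :
    ∃ z, f • z = y := by
  have hinv : InjOn (invFun f.1) (supp y) := fun a ha b hb hab => by
    rw [← invFun_eq (h ha), hab, invFun_eq (h hb)]
  obtain ⟨σ, hσ⟩ := exists_perm_eqOn hy.finite_supp hinv
  refine ⟨permToM σ • y, ?_⟩
  rw [← mul_smul]
  refine hy.suppOn_supp _ fun a ha => ?_
  show f.1 (σ a) = a
  rw [hσ ha, invFun_eq (h ha)]

end SuppOn

section Box

variable {X Y : Type*} [MulAction M Y]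

def boxMap (f : X → M) (p : X × Y) : X × Y := (p.1, f p.1 • p.2)

lemma boxMap_mem [MulAction M X] (hY : ∀ y : Y, FinSupp y) {f : X → M}
    (hf : ∀ x, range (f x).1 ⊆ (supp x)ᶜ) (p : X × Y) : boxMap f p ∈ BoxSet X Y :=
  subset_compl_iff_disjoint_left.1 <|
    ((hY p.2).supp_smul_subset _).trans ((image_subset_range _ _).trans (hf p.1))

lemma boxMap_injective (hY : ∀ y : Y, FinSupp y) (f : X → M) :
    Injective (boxMap f : X × Y → X × Y) := by
  rintro ⟨x₁, y₁⟩ ⟨x₂, y₂⟩ h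
  obtain ⟨rfl : x₁ = x₂, h₂⟩ := Prod.ext_iff.1 h
  exact Prod.ext rfl (smul_left_cancel_of_finSupp (hY y₁) (hY y₂) h₂)

lemma boxSet_subset_range_boxMap [MulAction M X] (hY : ∀ y : Y, FinSupp y) {f : X → M}
    (hf : ∀ x, (supp x)ᶜ ⊆ range (f x).1) : BoxSet X Y ⊆ range (boxMap f) := by
  rintro ⟨x, y⟩ hxy
  obtain ⟨z, rfl⟩ := (hY y).exists_smul_eq ((subset_compl_iff_disjoint_left.2 hxy).trans (hf x))
  exact ⟨(x, z), rfl⟩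

lemma boxMap_prodMap {Y' : Type*} [MulAction M Y'] (f : X → M) {u : Y → Y'}
    (hu : ∀ (g : M) (y : Y), u (g • y) = g • u y) (p : X × Y) :
    boxMap f (Prod.map id u p) = Prod.map id u (boxMap f p) :=
  Prod.ext rfl (hu _ _).symm

noncomputable def boxEquiv [MulAction M X] (hY : ∀ y : Y, FinSupp y) {f : X → M}
    (hf : ∀ x, range (f x).1 = (supp x)ᶜ) : X × Y ≃ BoxSet X Y :=
  Equiv.ofBijective (fun p => ⟨boxMap f p, boxMap_mem hY (fun x => (hf x).le) p⟩)
    ⟨fun _ _ h => boxMap_injective hY f (congrArg Subtype.val h), fun q =>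
      let ⟨p, hp⟩ := boxSet_subset_range_boxMap hY (fun x => (hf x).ge) q.2
      ⟨p, Subtype.ext hp⟩⟩

end Box

/-- For a tame `M`-set `X`, there is a bijection of underlying sets `X ⊠ Y ≅ X × Y`,
natural with respect to `M`-equivariant maps in the variable `Y` (ranging over all
tame `M`-sets `Y`). -/
theorem box_bijective_to_prod_natural_in_Y {X : Type} [MulAction M X]
    (hX : ∀ x : X, FinSupp x) :
    ∃ e : ∀ (Y : Type) [MulAction M Y], (∀ y : Y, FinSupp y) → (BoxSet X Y ≃ (X × Y)),
      ∀ (Y Y' : Type) [MulAction M Y] [MulAction M Y']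
        (tY : ∀ y : Y, FinSupp y) (tY' : ∀ y : Y', FinSupp y)
        (u : Y → Y'), (∀ (f : M) (y : Y), u (f • y) = f • u y) →
        ∀ (p : BoxSet X Y) (q : BoxSet X Y'),
          (q : X × Y') = (p.1.1, u p.1.2) →
          e Y' tY' q = Prod.map id u (e Y tY p) := by
  choose f hf using fun x => exists_range_eq_compl (hX x).finite_supp
  refine ⟨fun Y _ hY => (boxEquiv hY hf).symm, ?_⟩
  intro Y Y' _ _ hY hY' u hu p q hq
  rw [Equiv.symm_apply_eq]
  set z := (boxEquiv hY hf).symm p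
  have hp : (p : X × Y) = boxMap f z :=
    congrArg Subtype.val ((boxEquiv hY hf).apply_symm_apply p).symm
  apply Subtype.ext
  calc (q : X × Y') = Prod.map id u p := hq
    _ = Prod.map id u (boxMap f z) := by rw [hp]
    _ = boxMap f (Prod.map id u z) := (boxMap_prodMap f hu z).symm
end
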